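/- arXiv:math/0407128 — 6 statements merged into one kernel-verified Lean document; each statement's English description precedes it below -/
import Mathlib

section
/- Let $p_B\in(0,1]$, $C>0$, $0<\alpha\le1$, and $\gamma_n := (C/(n+C))^\alpha$ for $n\ge1$. If $0<\alpha<1$, or if $\alpha=1$ and $C>1/p_B$, then $\sum_{n\ge0}\prod_{k=1}^n(1-p_B\gamma_k) < +\infty$. -/
/-!
Since `1 - x ≤ exp (-x)`, the product is at most `exp (-p_B ∑_{k ≤ n} γ_k)`, so it suffices that
`p_B ∑_{k ≤ n} γ_k ≥ s log n - K` for some `s > 1`: the product is then `O(n^{-s})`.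
For `α < 1` the partial sums are at least `n γ_n ≍ n^{1-α}`, which beats any multiple of `log n`.
For `α = 1` they are at least `C log((n + 1 + C)/(1 + C))`, by comparison with `∫ dx/(x + C)`,
and `s = p_B C > 1` is exactly the hypothesis.
-/

open Finset Filter Real

theorem prod_one_sub_le_exp_neg_sum {ι : Type*} (s : Finset ι) (a : ι → ℝ)
    (ha : ∀ i ∈ s, a i ≤ 1) : ∏ i ∈ s, (1 - a i) ≤ exp (-∑ i ∈ s, a i) := by
  rw [← sum_neg_distrib, exp_sum]
  exact prod_le_prod (fun i hi => sub_nonneg.2 (ha i hi))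
    fun i _ => by linarith [add_one_le_exp (-a i)]

theorem summable_exp_neg_of_eventually_mul_log_sub_le {S : ℕ → ℝ} {s K : ℝ} (hs : 1 < s)
    (h : ∀ᶠ n : ℕ in atTop, s * log n - K ≤ S n) : Summable fun n => exp (-S n) := by
  refine Summable.of_norm_bounded_eventually_nat
    ((summable_nat_rpow.2 (neg_lt_neg hs)).mul_left (exp K)) ?_
  filter_upwards [h, eventually_ge_atTop 1] with n hn hn1
  have hn0 : (0 : ℝ) < n := by exact_mod_cast hn1
  rw [norm_of_nonneg (exp_pos _).le, rpow_def_of_pos hn0, ← exp_add, exp_le_exp]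
  linarith

noncomputable def powerStep (C α : ℝ) (k : ℕ) : ℝ := (C / (k + C)) ^ α

section powerStep

variable {C α : ℝ}

theorem powerStep_pos (hC : 0 < C) (k : ℕ) : 0 < powerStep C α k := by
  unfold powerStep; positivity

theorem powerStep_le_one (hC : 0 < C) (hα : 0 ≤ α) (k : ℕ) : powerStep C α k ≤ 1 :=
  rpow_le_one (by positivity) ((div_le_one (by positivity)).2 (by simp)) hα

theorem powerStep_antitone (hC : 0 < C) (hα : 0 ≤ α) : Antitone (powerStep C α) :=
  fun k l hkl => rpow_le_rpow (by positivity)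
    (div_le_div_of_nonneg_left hC.le (by positivity) (by gcongr)) hα

theorem mul_rpow_one_sub_le_sum_powerStep (hC : 0 < C) (hα : 0 ≤ α) {n : ℕ} (hn : C ≤ n) :
    (C / 2) ^ α * (n : ℝ) ^ (1 - α) ≤ ∑ k ∈ Icc 1 n, powerStep C α k := by
  have hn0 : (0 : ℝ) < n := hC.trans_le hn
  have hlast : (C / 2 / n) ^ α ≤ powerStep C α n :=
    rpow_le_rpow (by positivity) (by rw [div_div]; gcongr; linarith) hα
  have hsum : n • powerStep C α n ≤ ∑ k ∈ Icc 1 n, powerStep C α k := by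
    simpa using card_nsmul_le_sum (Icc 1 n) _ _
      fun k hk => powerStep_antitone hC hα (mem_Icc.1 hk).2
  calc (C / 2) ^ α * (n : ℝ) ^ (1 - α) = n * (C / 2 / n) ^ α := by
        rw [div_rpow (by positivity) hn0.le, rpow_sub hn0, rpow_one]
        field_simp
    _ ≤ n * powerStep C α n := by gcongr
    _ ≤ ∑ k ∈ Icc 1 n, powerStep C α k := by simpa using hsum

theorem eventually_two_mul_log_le_mul_sum_powerStep (hC : 0 < C) (hα : 0 ≤ α) (hα1 : α < 1)
    {c : ℝ} (hc : 0 < c) :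
    ∀ᶠ n : ℕ in atTop, 2 * log n ≤ c * ∑ k ∈ Icc 1 n, powerStep C α k := by
  have hc' : 0 < c * (C / 2) ^ α / 2 := by positivity
  have hlog : ∀ᶠ x : ℝ in atTop, log x ≤ c * (C / 2) ^ α / 2 * x ^ (1 - α) := by
    filter_upwards [(isLittleO_log_rpow_atTop (sub_pos.2 hα1)).bound hc',
      eventually_ge_atTop 1] with x hx hx1
    rwa [norm_of_nonneg (log_nonneg hx1), norm_of_nonneg (by positivity)] at hx
  filter_upwards [tendsto_natCast_atTop_atTop.eventually hlog,
    eventually_ge_atTop ⌈C⌉₊] with n hn hnC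
  have := mul_rpow_one_sub_le_sum_powerStep hC hα ((Nat.ceil_le).1 hnC)
  nlinarith

theorem log_sub_log_le_sum_inv (hC : 0 < C) (n : ℕ) :
    log (n + 1 + C) - log (1 + C) ≤ ∑ k ∈ Icc 1 n, 1 / ((k : ℝ) + C) := by
  induction n with
  | zero => simp
  | succ n ih =>
    have hpos : (0 : ℝ) < n + 1 + C := by positivity
    -- `log (x + 1) - log x = log (1 + 1/x) ≤ 1/x`
    have hstep : log (n + 1 + 1 + C) - log (n + 1 + C) ≤ 1 / (n + 1 + C) := by
      rw [← log_div (by positivity) hpos.ne']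
      refine (log_le_sub_one_of_pos (by positivity)).trans_eq ?_
      field_simp
      ring
    rw [sum_Icc_succ_top (by omega)]
    push_cast
    linarith

theorem mul_log_sub_le_sum_powerStep_one (hC : 0 < C) (n : ℕ) :
    C * log n - C * log (1 + C) ≤ ∑ k ∈ Icc 1 n, powerStep C 1 k := by
  have hlog : log n ≤ log (n + 1 + C) := by
    rcases n.eq_zero_or_pos with rfl | hn
    · simpa using log_nonneg (by linarith : (1 : ℝ) ≤ 0 + 1 + C)
    · exact log_le_log (by positivity) (by linarith)
  have hsum : ∑ k ∈ Icc 1 n, powerStep C 1 k = C * ∑ k ∈ Icc 1 n, 1 / ((k : ℝ) + C) := by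
    rw [mul_sum]
    exact sum_congr rfl fun k _ => by rw [powerStep, rpow_one, mul_one_div]
  rw [hsum]
  nlinarith [log_sub_log_le_sum_inv hC n]

end powerStep

theorem stmt1 (pB C α : ℝ) (hpB : pB ∈ Set.Ioc (0:ℝ) 1) (hC : 0 < C)
    (hα : α ∈ Set.Ioc (0:ℝ) 1) (γ : ℕ → ℝ)
    (hγ : ∀ n ≥ 1, γ n = (C / (n + C)) ^ α)
    (hcase : α < 1 ∨ (α = 1 ∧ C > 1 / pB)) :
    Summable (fun n : ℕ => ∏ k ∈ Finset.Icc 1 n, (1 - pB * γ k)) := by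
  obtain ⟨hpB0, hpB1⟩ := hpB
  have hα0 := hα.1.le
  have hγ' : ∀ n, ∏ k ∈ Icc 1 n, (1 - pB * γ k) = ∏ k ∈ Icc 1 n, (1 - pB * powerStep C α k) :=
    fun n => prod_congr rfl fun k hk => by rw [hγ k (mem_Icc.1 hk).1, powerStep]
  have hfactor (k : ℕ) : pB * powerStep C α k ≤ 1 :=
    mul_le_one₀ hpB1 (powerStep_pos hC k).le (powerStep_le_one hC hα0 k)
  obtain ⟨s, K, hs, hsum⟩ : ∃ s K : ℝ, 1 < s ∧
      ∀ᶠ n : ℕ in atTop, s * log n - K ≤ pB * ∑ k ∈ Icc 1 n, powerStep C α k := by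
    rcases hcase with hα1 | ⟨rfl, hCpB⟩
    · exact ⟨2, 0, one_lt_two, by
        simpa using eventually_two_mul_log_le_mul_sum_powerStep hC hα0 hα1 hpB0⟩
    · refine ⟨pB * C, pB * C * log (1 + C), by rwa [gt_iff_lt, div_lt_iff₀' hpB0] at hCpB,
        Eventually.of_forall fun n => ?_⟩
      nlinarith [mul_log_sub_le_sum_powerStep_one hC n]
  simp_rw [hγ']
  refine Summable.of_nonneg_of_le
    (fun n => prod_nonneg fun k _ => sub_nonneg.2 (hfactor k))
    (fun n => (prod_one_sub_le_exp_neg_sum _ _ fun k _ => hfactor k).trans_eq (by rw [← mul_sum]))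
    (summable_exp_neg_of_eventually_mul_log_sub_le hs hsum)
end

section
/- Let $(\Delta_n)_{n\ge0}$ be positive reals with $\Delta_0=1$, set $S_n := \sum_{k=0}^n \Delta_k$ and $\gamma_n := \Delta_n/S_n$ for $n\ge1$. Then for every $n\ge1$, $\log S_n - \sum_{k=1}^n \frac{\gamma_k^2}{1-\gamma_k} \le \Gamma_n \le \log S_n$, where $\Gamma_n := \sum_{k=1}^n \gamma_k$. -/
/-!
Since `γ k = (S k - S (k - 1)) / S k`, the bounds `1 - x⁻¹ ≤ log x ≤ x - 1` at `x = S k / S (k - 1)`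
give `γ k ≤ log (S k) - log (S (k - 1)) ≤ γ k / (1 - γ k) = γ k + γ k ^ 2 / (1 - γ k)`.
Summing over `1 ≤ k ≤ n`, the logarithms telescope to `log (S n)` because `S 0 = 1`.
-/

open Finset Real

theorem Finset.sum_Icc_one_sub_pred {M : Type*} [AddCommGroup M] (f : ℕ → M) (n : ℕ) :
    ∑ k ∈ Icc 1 n, (f k - f (k - 1)) = f n - f 0 := by
  induction n with
  | zero => simp
  | succ n ih => rw [sum_Icc_succ_top (by omega), ih, Nat.add_sub_cancel, sub_add_sub_cancel']

namespace Real

variable {a b : ℝ}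

theorem sub_div_le_log_sub_log (ha : 0 < a) (hb : 0 < b) : (b - a) / b ≤ log b - log a := by
  rw [← log_div hb.ne' ha.ne']
  calc (b - a) / b = 1 - (b / a)⁻¹ := by field_simp
    _ ≤ log (b / a) := one_sub_inv_le_log_of_pos (div_pos hb ha)

theorem log_sub_log_le_sub_div (ha : 0 < a) (hb : 0 < b) : log b - log a ≤ (b - a) / a := by
  rw [← log_div hb.ne' ha.ne']
  calc log (b / a) ≤ b / a - 1 := log_le_sub_one_of_pos (div_pos hb ha)
    _ = (b - a) / a := by field_simp

theorem log_sub_log_le_add_sq_div (ha : 0 < a) (hb : 0 < b) :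
    log b - log a ≤ (b - a) / b + ((b - a) / b) ^ 2 / (1 - (b - a) / b) := by
  have h : (b - a) / b + ((b - a) / b) ^ 2 / (1 - (b - a) / b) = (b - a) / a := by
    rw [show 1 - (b - a) / b = a / b by field_simp; ring]
    field_simp
    ring
  exact h ▸ log_sub_log_le_sub_div ha hb

end Real

theorem stmt3 (Δ : ℕ → ℝ) (hΔpos : ∀ n, 0 < Δ n) (hΔ0 : Δ 0 = 1)
    (S : ℕ → ℝ) (hS : ∀ n, S n = ∑ k ∈ Finset.range (n + 1), Δ k)
    (γ : ℕ → ℝ) (hγ : ∀ n ≥ 1, γ n = Δ n / S n)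
    (Γ : ℕ → ℝ) (hΓ : ∀ n, Γ n = ∑ k ∈ Finset.Icc 1 n, γ k) :
    ∀ n ≥ 1, Real.log (S n) - ∑ k ∈ Finset.Icc 1 n, (γ k) ^ 2 / (1 - γ k) ≤ Γ n
      ∧ Γ n ≤ Real.log (S n) := by
  intro n _
  have hS_pos k : 0 < S k := hS k ▸ sum_pos (fun i _ ↦ hΔpos i) nonempty_range_add_one
  have hγ_eq : ∀ k ∈ Icc 1 n, γ k = (S k - S (k - 1)) / S k := by
    intro k hk
    obtain ⟨m, rfl⟩ := Nat.exists_eq_add_of_le' (mem_Icc.1 hk).1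
    rw [hγ _ (by omega), hS, hS, sum_range_succ, Nat.add_sub_cancel, add_sub_cancel_left]
  have htelescope : ∑ k ∈ Icc 1 n, (log (S k) - log (S (k - 1))) = log (S n) := by
    rw [sum_Icc_one_sub_pred (fun k ↦ log (S k)), hS 0]
    simp [hΔ0]
  rw [hΓ, ← htelescope]
  constructor
  · rw [sub_le_iff_le_add, ← sum_add_distrib]
    exact sum_le_sum fun k hk ↦ hγ_eq k hk ▸ log_sub_log_le_add_sq_div (hS_pos _) (hS_pos _)
  · exact sum_le_sum fun k hk ↦ hγ_eq k hk ▸ sub_div_le_log_sub_log (hS_pos _) (hS_pos _)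
end

section
/- Let $p_B\in(0,1]$, $C>0$, and $\gamma_n := C/(n+C)$ for $n\ge1$ with $Cp_B\le1$. Then $\gamma_n = O(\Gamma_n e^{-p_B\Gamma_n})$, where $\Gamma_n = \sum_{k=1}^n\gamma_k$. -/
open Finset Filter

/-!
Telescoping `1/(k + C) ≤ log (k + C) - log (k - 1 + C)` gives `Γₙ ≤ C log ((n + C)/C)`, so
`C pB ≤ 1` yields `pB Γₙ ≤ log ((n + C)/C)`, i.e. `e^{-pB Γₙ} ≥ C/(n + C) = γₙ`.
Since `Γₙ ≥ γ₁ > 0`, the factor `Γₙ` only helps.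
-/

lemma inv_add_one_le_log_sub_log {x : ℝ} (hx : 0 < x) :
    (x + 1)⁻¹ ≤ Real.log (x + 1) - Real.log x := by
  have h := Real.log_le_sub_one_of_pos (div_pos hx (by linarith : 0 < x + 1))
  rw [Real.log_div hx.ne' (by linarith)] at h
  have hsub : x / (x + 1) - 1 = -(x + 1)⁻¹ := by field_simp; ring
  linarith

lemma sum_Icc_inv_add_le_log_sub_log {a : ℝ} (ha : 0 < a) (n : ℕ) :
    ∑ k ∈ Icc 1 n, ((k : ℝ) + a)⁻¹ ≤ Real.log (n + a) - Real.log a := by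
  induction n with
  | zero => simp
  | succ n ih =>
    have hstep := inv_add_one_le_log_sub_log (by positivity : (0 : ℝ) < n + a)
    rw [sum_Icc_succ_top (by omega)]
    push_cast
    rw [add_right_comm] at hstep
    linarith

lemma isBigO_mul_of_le_of_bounded_below {α : Type*} {l : Filter α} {f g h : α → ℝ} {c : ℝ}
    (hc : 0 < c) (hf : ∀ᶠ x in l, 0 ≤ f x ∧ f x ≤ h x) (hg : ∀ᶠ x in l, c ≤ g x) :
    f =O[l] fun x => g x * h x := by
  have hfh : f =O[l] h := Asymptotics.IsBigO.of_bound 1 <| hf.mono fun x ⟨hf0, hfh⟩ => by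
    rw [Real.norm_of_nonneg hf0, Real.norm_of_nonneg (hf0.trans hfh), one_mul]
    exact hfh
  have hone : (fun _ => (1 : ℝ)) =O[l] g :=
    (Asymptotics.isBigO_const_left_iff_pos_le_norm one_ne_zero).2
      ⟨c, hc, hg.mono fun x hx => hx.trans (Real.le_norm_self _)⟩
  exact hfh.trans <| (hone.mul (Asymptotics.isBigO_refl h l)).congr_left fun x => one_mul _

theorem stmt5 (pB C : ℝ) (hpB : pB ∈ Set.Ioc (0:ℝ) 1) (hC : 0 < C)
    (hCpB : C * pB ≤ 1) (γ : ℕ → ℝ) (hγ : ∀ n ≥ 1, γ n = C / (n + C))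
    (Γ : ℕ → ℝ) (hΓ : ∀ n, Γ n = ∑ k ∈ Finset.Icc 1 n, γ k) :
    (fun n => γ n) =O[atTop] (fun n => Γ n * Real.exp (-pB * Γ n)) := by
  have hγ_nonneg : ∀ n ≥ 1, 0 ≤ γ n := fun n hn => by rw [hγ n hn]; positivity
  have hΓ_le : ∀ n, Γ n ≤ C * (Real.log (n + C) - Real.log C) := fun n => by
    rw [hΓ, sum_congr rfl fun k hk => hγ k (mem_Icc.1 hk).1]
    simpa only [div_eq_mul_inv, mul_sum] using
      mul_le_mul_of_nonneg_left (sum_Icc_inv_add_le_log_sub_log hC n) hC.le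
  have hγ_le_exp : ∀ n ≥ 1, γ n ≤ Real.exp (-pB * Γ n) := fun n hn => by
    have hlog : 0 ≤ Real.log (n + C) - Real.log C :=
      sub_nonneg.2 (Real.log_le_log hC (by simp))
    have hpBΓ : pB * Γ n ≤ Real.log (n + C) - Real.log C := calc
      pB * Γ n ≤ pB * (C * (Real.log (n + C) - Real.log C)) :=
        mul_le_mul_of_nonneg_left (hΓ_le n) hpB.1.le
      _ = C * pB * (Real.log (n + C) - Real.log C) := by ring
      _ ≤ Real.log (n + C) - Real.log C := mul_le_of_le_one_left hlog hCpB
    calc γ n = Real.exp (-(Real.log (n + C) - Real.log C)) := by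
          rw [hγ n hn, neg_sub, Real.exp_sub, Real.exp_log hC, Real.exp_log (by positivity)]
      _ ≤ Real.exp (-pB * Γ n) := Real.exp_le_exp.2 (by linarith)
  have hγ₁_le_Γ : ∀ n ≥ 1, γ 1 ≤ Γ n := fun n hn => by
    rw [hΓ]
    exact single_le_sum (fun k hk => hγ_nonneg k (mem_Icc.1 hk).1) (mem_Icc.2 ⟨le_rfl, hn⟩)
  refine isBigO_mul_of_le_of_bounded_below (c := γ 1) (by rw [hγ 1 le_rfl]; positivity) ?_ ?_
  · filter_upwards [eventually_ge_atTop 1] with n hn using ⟨hγ_nonneg n hn, hγ_le_exp n hn⟩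
  · filter_upwards [eventually_ge_atTop 1] with n hn using hγ₁_le_Γ n hn
end

section
/- Let $0<\pi\le1$, $x\in(0,1)$, $(\gamma_n)_{n\ge1}$ a sequence in $(0,1)$ with $\Gamma_n:=\sum_{k=1}^n\gamma_k$, and define $x_0=x$, $x_{n+1}=x_n+\pi\gamma_{n+1}x_n(1-x_n)$. Then $(x_n)$ is increasing, $x_n\in(0,1)$ for all $n$, and $0 \le 1-x_n \le (1-x)e^{-\pi x\,\Gamma_n}$ for all $n\ge0$. -/
open Finset

/-!
Writing `1 - x (n+1) = (1 - x n) * (1 - a n * x n)`, the sequence stays in `(0, 1)` and increases;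
since then `x n ≥ x 0`, each factor is at most `1 - a n * x 0 ≤ exp (-a n * x 0)`, and the product
telescopes to the exponential bound.
-/

section Step

variable {a y : ℝ}

lemma one_sub_logistic_step (a y : ℝ) : 1 - (y + a * y * (1 - y)) = (1 - y) * (1 - a * y) := by
  ring

lemma lt_logistic_step (hy : y ∈ Set.Ioo (0 : ℝ) 1) (ha : 0 < a) : y < y + a * y * (1 - y) := by
  have : 0 < a * y * (1 - y) := mul_pos (mul_pos ha hy.1) (sub_pos.2 hy.2)
  linarith

lemma logistic_step_mem_Ioo (hy : y ∈ Set.Ioo (0 : ℝ) 1) (ha : a ∈ Set.Icc (0 : ℝ) 1) :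
    y + a * y * (1 - y) ∈ Set.Ioo (0 : ℝ) 1 := by
  have hay : a * y < 1 := by nlinarith [hy.1, hy.2, ha.1, ha.2]
  have hpos : 0 < 1 - (y + a * y * (1 - y)) := by
    rw [one_sub_logistic_step]
    exact mul_pos (sub_pos.2 hy.2) (sub_pos.2 hay)
  refine ⟨?_, by linarith⟩
  have : 0 ≤ a * y * (1 - y) := mul_nonneg (mul_nonneg ha.1 hy.1.le) (sub_nonneg.2 hy.2.le)
  linarith [hy.1]

lemma one_sub_logistic_step_le_exp {y₀ : ℝ} (hy₀ : y₀ ≤ y) (hy : y ≤ 1) (ha : 0 ≤ a) :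
    1 - (y + a * y * (1 - y)) ≤ (1 - y) * Real.exp (-(a * y₀)) := by
  rw [one_sub_logistic_step]
  calc (1 - y) * (1 - a * y)
      ≤ (1 - y) * (1 - a * y₀) := by gcongr
    _ ≤ (1 - y) * Real.exp (-(a * y₀)) := by
        gcongr
        linarith [Real.add_one_le_exp (-(a * y₀))]

end Step

section Sequence

variable {a x : ℕ → ℝ} (hrec : ∀ n, x (n + 1) = x n + a n * x n * (1 - x n))
include hrec

lemma logistic_mem_Ioo (ha : ∀ n, a n ∈ Set.Icc (0 : ℝ) 1) (hx : x 0 ∈ Set.Ioo (0 : ℝ) 1)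
    (n : ℕ) : x n ∈ Set.Ioo (0 : ℝ) 1 := by
  induction n with
  | zero => exact hx
  | succ n ih => rw [hrec n]; exact logistic_step_mem_Ioo ih (ha n)

lemma logistic_strictMono (ha : ∀ n, 0 < a n) (hx : ∀ n, x n ∈ Set.Ioo (0 : ℝ) 1) :
    StrictMono x :=
  strictMono_nat_of_lt_succ fun n => (hrec n).symm ▸ lt_logistic_step (hx n) (ha n)

lemma one_sub_logistic_le_exp (ha : ∀ n, 0 ≤ a n) (hmono : Monotone x) (hx : ∀ n, x n ≤ 1)
    (n : ℕ) : 1 - x n ≤ (1 - x 0) * Real.exp (-(x 0 * ∑ k ∈ range n, a k)) := by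
  induction n with
  | zero => simp
  | succ n ih =>
    calc 1 - x (n + 1)
        ≤ (1 - x n) * Real.exp (-(a n * x 0)) := by
          rw [hrec n]
          exact one_sub_logistic_step_le_exp (hmono (Nat.zero_le n)) (hx n) (ha n)
      _ ≤ (1 - x 0) * Real.exp (-(x 0 * ∑ k ∈ range n, a k)) * Real.exp (-(a n * x 0)) := by
          gcongr
      _ = (1 - x 0) * Real.exp (-(x 0 * ∑ k ∈ range (n + 1), a k)) := by
          rw [mul_assoc, ← Real.exp_add, sum_range_succ]
          ring_nf

end Sequence

lemma sum_Icc_one_eq_sum_range (f : ℕ → ℝ) (n : ℕ) :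
    ∑ k ∈ Icc 1 n, f k = ∑ k ∈ range n, f (k + 1) := by
  rw [← Ico_add_one_right_eq_Icc, sum_Ico_eq_sum_range]
  simp [add_comm]

theorem stmt6 (π x₀ : ℝ) (hπ : π ∈ Set.Ioc (0:ℝ) 1) (hx₀ : x₀ ∈ Set.Ioo (0:ℝ) 1)
    (γ : ℕ → ℝ) (hγ : ∀ n ≥ 1, γ n ∈ Set.Ioo (0:ℝ) 1)
    (Γ : ℕ → ℝ) (hΓ : ∀ n, Γ n = ∑ k ∈ Finset.Icc 1 n, γ k)
    (x : ℕ → ℝ) (hx0 : x 0 = x₀)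
    (hrec : ∀ n, x (n + 1) = x n + π * γ (n + 1) * x n * (1 - x n)) :
    StrictMono x ∧ (∀ n, x n ∈ Set.Ioo (0:ℝ) 1) ∧
      ∀ n, 0 ≤ 1 - x n ∧ 1 - x n ≤ (1 - x₀) * Real.exp (-π * x₀ * Γ n) := by
  subst hx0
  have hpos : ∀ n, 0 < π * γ (n + 1) := fun n => mul_pos hπ.1 (hγ (n + 1) n.succ_pos).1
  have hle : ∀ n, π * γ (n + 1) ≤ 1 := fun n =>
    mul_le_one₀ hπ.2 (hγ (n + 1) n.succ_pos).1.le (hγ (n + 1) n.succ_pos).2.le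
  have hmem := logistic_mem_Ioo hrec (fun n => ⟨(hpos n).le, hle n⟩) hx₀
  have hmono := logistic_strictMono hrec hpos hmem
  refine ⟨hmono, hmem, fun n => ⟨sub_nonneg.2 (hmem n).2.le, ?_⟩⟩
  convert one_sub_logistic_le_exp hrec (fun n => (hpos n).le) hmono.monotone
    (fun n => (hmem n).2.le) n using 3
  rw [hΓ, sum_Icc_one_eq_sum_range, ← mul_sum]
  ring
end

section
/- In the martingale case $p_A=p_B=p\in(0,1]$ of the two-armed bandit algorithm started at $x\in(0,1)$, for every $n\ge1$: $\mathbb{E}_x[X_n(1-X_n)] = x(1-x)\prod_{k=1}^n(1-p\gamma_k^2)$. -/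
open MeasureTheory ProbabilityTheory Filter Set

/-!
Write `Y = X n`, `B = 1{V ≤ p}` and `I = 1{U ≤ Y}`, so that `X (n + 1) = Y + γ B (I - Y)`.
Since `B² = B` and `I² = I`,
`X (n + 1) (1 - X (n + 1)) = Y (1 - Y) + γ B (I - Y) (1 - 2Y) - γ² B (I - Y)²`.
The pair `(U, V)` of the next step is independent of `Y`, so conditionally on `Y = y` the
variables `B` and `I` are independent Bernoulli variables with parameters `p` and `y`: the middle
term has mean zero and `(I - Y)²` has mean `y (1 - y)`. Hence each step multiplies
`𝔼[X (1 - X)]` by `1 - p γ²`.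
-/

-- `w = (U_n, V_n)`: `U_n` selects the arm and `V_n` decides whether it pays off.
noncomputable def banditStep (g p y : ℝ) (w : ℝ × ℝ) : ℝ :=
  y + g * (Iic p).indicator 1 w.2 * ((Iic y).indicator 1 w.1 - y)

lemma measurable_banditStep (g p : ℝ) :
    Measurable fun z : ℝ × (ℝ × ℝ) ↦ banditStep g p z.1 z.2 := by
  have hV : Measurable fun z : ℝ × (ℝ × ℝ) ↦ (Iic p).indicator (1 : ℝ → ℝ) z.2.2 :=
    (measurable_one.indicator measurableSet_Iic).comp measurable_snd.snd
  have hU : Measurable fun z : ℝ × (ℝ × ℝ) ↦ (Iic z.1).indicator (1 : ℝ → ℝ) z.2.1 :=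
    measurable_one.indicator (measurableSet_le measurable_snd.fst measurable_fst)
  unfold banditStep
  fun_prop

lemma banditStep_mem_Icc {g y : ℝ} (hg : g ∈ Icc (0 : ℝ) 1) (hy : y ∈ Icc (0 : ℝ) 1)
    (p : ℝ) (w : ℝ × ℝ) : banditStep g p y w ∈ Icc (0 : ℝ) 1 := by
  obtain ⟨hg0, hg1⟩ := hg
  obtain ⟨hy0, hy1⟩ := hy
  unfold banditStep
  by_cases hu : w.1 ≤ y <;> by_cases hv : w.2 ≤ p <;>
    simp [hu, hv] <;> constructor <;> nlinarith

lemma integral_banditStep_mul_one_sub {α β : Measure ℝ} [IsProbabilityMeasure α]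
    [IsProbabilityMeasure β] (g p y : ℝ) (hy : α.real (Iic y) = y) :
    ∫ w, banditStep g p y w * (1 - banditStep g p y w) ∂(α.prod β)
      = (1 - β.real (Iic p) * g ^ 2) * (y * (1 - y)) := by
  set c := g * (1 - 2 * y) - g ^ 2 * (1 - 2 * y)
  set d := -(g * y * (1 - 2 * y)) - g ^ 2 * y ^ 2
  have hsplit : ∀ w : ℝ × ℝ, banditStep g p y w * (1 - banditStep g p y w)
      = y * (1 - y) + (c * (Iic y).indicator 1 w.1 + d) * (Iic p).indicator 1 w.2 := by
    intro w
    by_cases hu : w.1 ≤ y <;> by_cases hv : w.2 ≤ p <;> simp [banditStep, hu, hv, c, d] <;> ring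
  have hU : Integrable (fun u ↦ c * (Iic y).indicator (1 : ℝ → ℝ) u) α :=
    ((integrable_const 1).indicator measurableSet_Iic).const_mul c
  have hUd : Integrable (fun u ↦ c * (Iic y).indicator (1 : ℝ → ℝ) u + d) α :=
    hU.add (integrable_const d)
  have hV : Integrable ((Iic p).indicator (1 : ℝ → ℝ)) β :=
    (integrable_const 1).indicator measurableSet_Iic
  simp_rw [hsplit]
  rw [integral_add (integrable_const _) (hUd.mul_prod hV),
    integral_prod_mul (fun u ↦ c * (Iic y).indicator 1 u + d),
    integral_add hU (integrable_const d), integral_const_mul c,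
    integral_indicator_one measurableSet_Iic, integral_indicator_one measurableSet_Iic, hy]
  simp
  ring

lemma measureReal_restrict_Icc_Iic {t : ℝ} (ht : t ∈ Icc (0 : ℝ) 1) :
    (volume.restrict (Icc (0 : ℝ) 1)).real (Iic t) = t := by
  have hset : Iic t ∩ Icc 0 1 = Icc 0 t := by
    ext s
    simp only [mem_inter_iff, mem_Iic, mem_Icc]
    constructor
    · rintro ⟨hst, hs0, -⟩
      exact ⟨hs0, hst⟩
    · rintro ⟨hs0, hst⟩
      exact ⟨hst, hs0, hst.trans ht.2⟩
  rw [measureReal_restrict_apply measurableSet_Iic, hset, Real.volume_real_Icc_of_le ht.1,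
    sub_zero]

lemma measurable_iSup_comap_of_recursion {Ω α β : Type*} [MeasurableSpace α]
    [mβ : MeasurableSpace β] {ξ : ℕ → Ω → β} {X : ℕ → Ω → α} {Φ : ℕ → α × β → α}
    (hΦ : ∀ n, Measurable (Φ n)) (x₀ : α) (hX0 : ∀ ω, X 0 ω = x₀)
    (hrec : ∀ n ω, X (n + 1) ω = Φ n (X n ω, ξ n ω)) (n : ℕ) :
    Measurable[⨆ k ∈ Iio n, mβ.comap (ξ k)] (X n) := by
  induction n with
  | zero =>
    rw [funext hX0]
    exact measurable_const
  | succ n ih =>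
    have hle : (⨆ k ∈ Iio n, mβ.comap (ξ k)) ≤ ⨆ k ∈ Iio (n + 1), mβ.comap (ξ k) :=
      biSup_mono fun k hk ↦ lt_trans hk (Nat.lt_succ_self n)
    have hξn : Measurable[⨆ k ∈ Iio (n + 1), mβ.comap (ξ k)] (ξ n) :=
      (comap_measurable (ξ n)).mono
        (le_biSup (fun k ↦ mβ.comap (ξ k)) (show n ∈ Iio (n + 1) from Nat.lt_succ_self n)) le_rfl
    rw [funext (hrec n)]
    exact (hΦ n).comp ((ih.mono hle le_rfl).prodMk hξn)

section Independence

variable {Ω α β : Type*} [MeasurableSpace Ω] [MeasurableSpace α] [mβ : MeasurableSpace β]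
  {μ : Measure Ω}

lemma indepFun_of_recursion {ξ : ℕ → Ω → β} (hξ : ∀ n, Measurable (ξ n))
    (hind : iIndepFun ξ μ) {X : ℕ → Ω → α} {Φ : ℕ → α × β → α} (hΦ : ∀ n, Measurable (Φ n))
    (x₀ : α) (hX0 : ∀ ω, X 0 ω = x₀) (hrec : ∀ n ω, X (n + 1) ω = Φ n (X n ω, ξ n ω))
    (n : ℕ) : IndepFun (X n) (ξ n) μ := by
  have h := indep_iSup_of_disjoint (fun k ↦ (hξ k).comap_le) hind.iIndep
    (Set.disjoint_singleton_right.2 (lt_irrefl n) : Disjoint (Iio n) {n})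
  rw [iSup_singleton] at h
  rw [IndepFun_iff_Indep]
  exact indep_of_indep_of_le_left h
    (measurable_iSup_comap_of_recursion hΦ x₀ hX0 hrec n).comap_le

lemma ProbabilityTheory.IndepFun.integral_comp_eq_integral_integral [IsFiniteMeasure μ] {Y : Ω → α}
    {W : Ω → β} (hYW : IndepFun Y W μ) (hY : Measurable Y) (hW : Measurable W)
    {F : α × β → ℝ} (hF : Measurable F) (hFYW : Integrable (fun ω ↦ F (Y ω, W ω)) μ) :
    ∫ ω, F (Y ω, W ω) ∂μ = ∫ y, ∫ w, F (y, w) ∂(μ.map W) ∂(μ.map Y) := by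
  have hlaw : μ.map (fun ω ↦ (Y ω, W ω)) = (μ.map Y).prod (μ.map W) :=
    (indepFun_iff_map_prod_eq_prod_map_map hY.aemeasurable hW.aemeasurable).1 hYW
  have hint : Integrable F ((μ.map Y).prod (μ.map W)) := by
    rw [← hlaw]
    exact (integrable_map_measure hF.aestronglyMeasurable (hY.prodMk hW).aemeasurable).2 hFYW
  rw [← integral_prod F hint, ← hlaw,
    integral_map (hY.prodMk hW).aemeasurable hF.aestronglyMeasurable]

lemma integral_banditStep_comp_mul_one_sub [IsProbabilityMeasure μ] {Y : Ω → ℝ}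
    {W : Ω → ℝ × ℝ} (hYW : IndepFun Y W μ) (hY : Measurable Y) (hW : Measurable W)
    (hY01 : ∀ ω, Y ω ∈ Icc (0 : ℝ) 1) {α β : Measure ℝ} [IsProbabilityMeasure α]
    [IsProbabilityMeasure β] (hWlaw : μ.map W = α.prod β)
    (hα : ∀ y ∈ Icc (0 : ℝ) 1, α.real (Iic y) = y) {g : ℝ} (hg : g ∈ Icc (0 : ℝ) 1) (p : ℝ) :
    ∫ ω, banditStep g p (Y ω) (W ω) * (1 - banditStep g p (Y ω) (W ω)) ∂μ
      = (1 - β.real (Iic p) * g ^ 2) * ∫ ω, Y ω * (1 - Y ω) ∂μ := by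
  have hF : Measurable fun z : ℝ × (ℝ × ℝ) ↦
      banditStep g p z.1 z.2 * (1 - banditStep g p z.1 z.2) :=
    (measurable_banditStep g p).mul (measurable_const.sub (measurable_banditStep g p))
  have hFYW : Integrable
      (fun ω ↦ banditStep g p (Y ω) (W ω) * (1 - banditStep g p (Y ω) (W ω))) μ := by
    refine Integrable.of_bound (hF.comp (hY.prodMk hW)).aestronglyMeasurable 1
      (Eventually.of_forall fun ω ↦ ?_)
    obtain ⟨h0, h1⟩ := banditStep_mem_Icc hg (hY01 ω) p (W ω)
    rw [Real.norm_eq_abs, abs_le]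
    constructor <;> nlinarith
  have hYae : ∀ᵐ y ∂μ.map Y, y ∈ Icc (0 : ℝ) 1 :=
    (ae_map_iff hY.aemeasurable measurableSet_Icc).2 (Eventually.of_forall hY01)
  rw [hYW.integral_comp_eq_integral_integral hY hW hF hFYW, hWlaw,
    integral_congr_ae (hYae.mono fun y hy ↦ integral_banditStep_mul_one_sub g p y (hα y hy)),
    integral_const_mul, integral_map hY.aemeasurable (by fun_prop)]

end Independence

theorem stmt10 (Ω : Type*) [MeasurableSpace Ω] (μ : Measure Ω) [IsProbabilityMeasure μ]
    (U V : ℕ → Ω → ℝ) (γ : ℕ → ℝ) (p x : ℝ)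
    (hp : p ∈ Set.Ioc (0:ℝ) 1) (hx : x ∈ Set.Ioo (0:ℝ) 1)
    (hγ : ∀ n ≥ 1, γ n ∈ Set.Ioo (0:ℝ) 1)
    (hU : ∀ n ≥ 1, Measurable (U n)) (hV : ∀ n ≥ 1, Measurable (V n))
    (hUlaw : ∀ n ≥ 1, μ.map (U n) = volume.restrict (Set.Icc (0:ℝ) 1))
    (hVlaw : ∀ n ≥ 1, μ.map (V n) = volume.restrict (Set.Icc (0:ℝ) 1))
    (hiid : iIndepFun
      (fun n ω => (U n ω, V n ω)) μ)
    (hUV : ∀ n ≥ 1, IndepFun (U n) (V n) μ)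
    (X : ℕ → Ω → ℝ) (hX0 : ∀ ω, X 0 ω = x)
    (hrec : ∀ n ω, X (n + 1) ω = X n ω + γ (n + 1) *
      ({ω' | V (n + 1) ω' ≤ p}.indicator (1 : Ω → ℝ) ω) *
      ({ω' | U (n + 1) ω' ≤ X n ω'}.indicator (1 : Ω → ℝ) ω - X n ω)) :
    ∀ n ≥ 1, ∫ ω, X n ω * (1 - X n ω) ∂μ
      = x * (1 - x) * ∏ k ∈ Finset.Icc 1 n, (1 - p * (γ k) ^ 2) := by
  have : IsProbabilityMeasure (volume.restrict (Icc (0 : ℝ) 1)) := ⟨by simp⟩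
  set ξ : ℕ → Ω → ℝ × ℝ := fun k ω ↦ (U (k + 1) ω, V (k + 1) ω)
  have hξ : ∀ k, Measurable (ξ k) := fun k ↦ (hU _ k.succ_pos).prodMk (hV _ k.succ_pos)
  have hξlaw : ∀ k, μ.map (ξ k) = (volume.restrict (Icc (0 : ℝ) 1)).prod
      (volume.restrict (Icc (0 : ℝ) 1)) := fun k ↦ by
    rw [(indepFun_iff_map_prod_eq_prod_map_map (hU _ k.succ_pos).aemeasurable
      (hV _ k.succ_pos).aemeasurable).1 (hUV _ k.succ_pos), hUlaw _ k.succ_pos,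
      hVlaw _ k.succ_pos]
  have hstep : ∀ k ω, X (k + 1) ω = banditStep (γ (k + 1)) p (X k ω) (ξ k ω) := fun k ω ↦ by
    rw [hrec]
    simp [banditStep, indicator_apply, ξ]
  have hγ' : ∀ k, γ (k + 1) ∈ Icc (0 : ℝ) 1 := fun k ↦ Ioo_subset_Icc_self (hγ _ k.succ_pos)
  have hX01 : ∀ k ω, X k ω ∈ Icc (0 : ℝ) 1 := by
    intro k
    induction k with
    | zero => exact fun ω ↦ hX0 ω ▸ Ioo_subset_Icc_self hx
    | succ k ih => exact fun ω ↦ hstep k ω ▸ banditStep_mem_Icc (hγ' k) (ih ω) p (ξ k ω)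
  have hXmeas : ∀ k, Measurable (X k) := fun k ↦
    (measurable_iSup_comap_of_recursion (fun n ↦ measurable_banditStep (γ (n + 1)) p) x hX0
      hstep k).mono (iSup₂_le fun i _ ↦ (hξ i).comap_le) le_rfl
  have hXξ : ∀ k, IndepFun (X k) (ξ k) μ :=
    indepFun_of_recursion hξ (hiid.precomp Nat.succ_injective)
      (fun n ↦ measurable_banditStep (γ (n + 1)) p) x hX0 hstep
  rintro n -
  induction n with
  | zero => simp [hX0]
  | succ k ih =>
    simp_rw [hstep k]
    rw [integral_banditStep_comp_mul_one_sub (hXξ k) (hXmeas k) (hξ k) (hX01 k) (hξlaw k)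
      (fun y hy ↦ measureReal_restrict_Icc_Iic hy) (hγ' k) p,
      measureReal_restrict_Icc_Iic (Ioc_subset_Icc_self hp), ih,
      Finset.prod_Icc_succ_top (Nat.le_add_left 1 k)]
    ring
end

section
/- If $\sum_{n\ge0}\prod_{k=1}^n(1-p_B\gamma_k)<+\infty$ and $p_B>0$, then for every $x\in[0,1)$, $\mathbb{P}_x(X_n\to0)>0$. More precisely, $\mathbb{P}_x(X_\infty=0) \ge \mathbb{E}_x\big[\prod_{n\ge1}\big(1 - x\prod_{k=1}^{n-1}(1-\mathbf{1}_{B_k}\gamma_k)\big)\big] > 0$. -/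
/-!
Write `P n = ∏_{k ≤ n} (1 - γ_k 1_{B_k})`. As long as `U_{n+1} > x P n` for every `n`, the
indicators of the `A`-moves vanish and the recursion collapses to `X n = x P n`. Since the `U_n`
are independent uniforms, independent of the `B_n`, conditioning on the `B`'s gives
`ℙ(U_{n+1} > x P n for all n < N) = 𝔼 ∏_{n < N} (1 - x P n)`, and letting `N → ∞` bounds
`ℙ(X_n → 0)` from below by `𝔼 ∏_n (1 - x P n)` once we know that `P n → 0`.

Independence of the `B_k` gives `𝔼 P n = ∏_{k ≤ n} (1 - p_B γ_k)`, which is summable, so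
`∑ P n < ∞` almost surely. This yields `P n → 0`, and it also makes the infinite product
`∏ (1 - x P n) = exp (∑ log (1 - x P n))` positive almost surely, hence of positive expectation.
-/

open MeasureTheory ProbabilityTheory Filter Set

section InfiniteProducts

variable {ι : Type*} {f : ι → ℝ}

theorem hasProd_iInf_prod_of_nonneg_of_le_one (h0 : ∀ i, 0 ≤ f i) (h1 : ∀ i, f i ≤ 1) :
    HasProd f (⨅ s : Finset ι, ∏ i ∈ s, f i) :=
  tendsto_atTop_ciInf (Finset.prod_anti_set_of_le_one h0 h1)
    ⟨0, by rintro _ ⟨s, rfl⟩; exact Finset.prod_nonneg fun i _ => h0 i⟩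

theorem tprod_le_prod_of_nonneg_of_le_one (h0 : ∀ i, 0 ≤ f i) (h1 : ∀ i, f i ≤ 1)
    (s : Finset ι) : ∏' i, f i ≤ ∏ i ∈ s, f i := by
  rw [(hasProd_iInf_prod_of_nonneg_of_le_one h0 h1).tprod_eq]
  exact ciInf_le ⟨0, by rintro _ ⟨s, rfl⟩; exact Finset.prod_nonneg fun i _ => h0 i⟩ s

theorem tprod_one_sub_pos_of_summable {a : ι → ℝ} (h : ∀ i, a i < 1) (ha : Summable a) :
    0 < ∏' i, (1 - a i) := by
  simp_rw [sub_eq_add_neg]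
  rw [← Real.rexp_tsum_eq_tprod (fun i => by linarith [h i])
    (Real.summable_log_one_add_of_summable ha.neg)]
  exact Real.exp_pos _

theorem measurable_tprod_of_nonneg_of_le_one {Ω : Type*} [MeasurableSpace Ω] [Countable ι]
    {g : ι → Ω → ℝ} (hg : ∀ i, Measurable (g i)) (h0 : ∀ i ω, 0 ≤ g i ω)
    (h1 : ∀ i ω, g i ω ≤ 1) : Measurable fun ω => ∏' i, g i ω := by
  simp_rw [fun ω => (hasProd_iInf_prod_of_nonneg_of_le_one (h0 · ω) (h1 · ω)).tprod_eq]
  exact Measurable.iInf fun s => Finset.measurable_prod s fun i _ => hg i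

end InfiniteProducts

section Probability

variable {Ω ι : Type*} [MeasurableSpace Ω] {μ : Measure Ω}

theorem integral_pos_of_ae_pos [NeZero μ] {f : Ω → ℝ} (hfi : Integrable f μ)
    (hf : ∀ᵐ ω ∂μ, 0 < f ω) : 0 < ∫ ω, f ω ∂μ := by
  rw [integral_pos_iff_support_of_nonneg_ae (hf.mono fun _ h => h.le) hfi, pos_iff_ne_zero]
  intro h
  obtain ⟨ω, hpos, hzero⟩ := (hf.and (measure_eq_zero_iff_ae_notMem.1 h)).exists
  exact hzero hpos.ne'

theorem ae_summable_of_summable_integral [Countable ι] {f : ι → Ω → ℝ}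
    (hf : ∀ i, Integrable (f i) μ) (h0 : ∀ i ω, 0 ≤ f i ω)
    (hs : Summable fun i => ∫ ω, f i ω ∂μ) : ∀ᵐ ω ∂μ, Summable fun i => f i ω := by
  have hnorm : ∀ᵐ ω ∂μ, Summable fun i => ‖f i ω‖ := by
    refine summable_norm_of_tsum_eLpNorm_ne_top le_rfl (fun i => (hf i).aestronglyMeasurable) ?_
    simp_rw [eLpNorm_one_eq_lintegral_enorm, ← ofReal_integral_norm_eq_lintegral_enorm (hf _),
      Real.norm_of_nonneg (h0 _ _)]
    rw [← ENNReal.ofReal_tsum_of_nonneg (fun i => integral_nonneg (h0 i)) hs]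
    exact ENNReal.ofReal_ne_top
  exact hnorm.mono fun ω hω => hω.of_norm

theorem ProbabilityTheory.iIndepFun.integral_finset_prod {f : ι → Ω → ℝ} (h : iIndepFun f μ)
    (s : Finset ι) (hf : ∀ i ∈ s, AEStronglyMeasurable (f i) μ) :
    ∫ ω, ∏ i ∈ s, f i ω ∂μ = ∏ i ∈ s, ∫ ω, f i ω ∂μ :=
  calc ∫ ω, ∏ i ∈ s, f i ω ∂μ = ∫ ω, ∏ i : s, f i ω ∂μ := by
        simp_rw [← Finset.prod_coe_sort s (fun i => f i _)]
    _ = ∏ i : s, ∫ ω, f i ω ∂μ :=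
      (iIndepFun_iff_finset.1 h s).integral_fun_prod_eq_prod_integral fun i => hf i i.2
    _ = ∏ i ∈ s, ∫ ω, f i ω ∂μ := Finset.prod_coe_sort s (fun i => ∫ ω, f i ω ∂μ)

theorem integral_one_sub_indicator_mul [IsProbabilityMeasure μ] {s : Set Ω}
    (hs : MeasurableSet s) (c : ℝ) :
    ∫ ω, (1 - s.indicator (1 : Ω → ℝ) ω * c) ∂μ = 1 - μ.real s * c := by
  have hint : Integrable (s.indicator (1 : Ω → ℝ)) μ := (integrable_const 1).indicator hs
  rw [integral_sub (integrable_const 1) (hint.mul_const c), integral_mul_const,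
    integral_indicator_one hs, integral_const, probReal_univ, one_smul]

theorem measure_preimage_Ioi_of_map_eq_uniform {V : Ω → ℝ} (hV : Measurable V)
    (hlaw : μ.map V = volume.restrict (Icc 0 1)) {τ : ℝ} (hτ : τ ∈ Icc (0 : ℝ) 1) :
    μ (V ⁻¹' Ioi τ) = ENNReal.ofReal (1 - τ) := by
  have hinter : Ioi τ ∩ Icc 0 1 = Ioc τ 1 := by
    ext y
    simp only [mem_inter_iff, mem_Ioi, mem_Icc, mem_Ioc]
    constructor
    · rintro ⟨hτy, -, hy1⟩
      exact ⟨hτy, hy1⟩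
    · rintro ⟨hτy, hy1⟩
      exact ⟨hτy, hτ.1.trans hτy.le, hy1⟩
  rw [← Measure.map_apply hV measurableSet_Ioi, hlaw, Measure.restrict_apply measurableSet_Ioi,
    hinter, Real.volume_Ioc]

/- The law of `(T, V)` is a product measure, and on each slice `T = t` the event is an
intersection of independent events `V i > t i` of probability `1 - t i`. -/
theorem measure_forall_lt_uniform_of_indepFun [IsProbabilityMeasure μ] {s : Finset ι}
    {V T : ι → Ω → ℝ} (hV : iIndepFun V μ) (hVm : ∀ i ∈ s, Measurable (V i))
    (hVlaw : ∀ i ∈ s, μ.map (V i) = volume.restrict (Icc 0 1))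
    (hTm : ∀ i ∈ s, Measurable (T i)) (hT : ∀ i ∈ s, ∀ ω, T i ω ∈ Icc (0 : ℝ) 1)
    (hTV : IndepFun (fun ω (i : s) => T i ω) (fun ω (i : s) => V i ω) μ) :
    μ {ω | ∀ i ∈ s, T i ω < V i ω} = ∫⁻ ω, ENNReal.ofReal (∏ i ∈ s, (1 - T i ω)) ∂μ := by
  set Tv : Ω → s → ℝ := fun ω i => T i ω
  set Vv : Ω → s → ℝ := fun ω i => V i ω
  have hTv : Measurable Tv := measurable_pi_lambda _ fun i => hTm i i.2
  have hVv : Measurable Vv := measurable_pi_lambda _ fun i => hVm i i.2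
  set S : Set ((s → ℝ) × (s → ℝ)) := {p | ∀ i, p.1 i < p.2 i}
  have hS : MeasurableSet S := by
    simp only [S, ofPred_forall]
    exact MeasurableSet.iInter fun i =>
      measurableSet_lt ((measurable_pi_apply i).comp measurable_fst)
        ((measurable_pi_apply i).comp measurable_snd)
  have hpre : {ω | ∀ i ∈ s, T i ω < V i ω} = (fun ω => (Tv ω, Vv ω)) ⁻¹' S := by
    ext ω
    simp [S, Tv, Vv]
  have hslice : ∀ ω, μ.map Vv (Prod.mk (Tv ω) ⁻¹' S) =
      ENNReal.ofReal (∏ i ∈ s, (1 - T i ω)) := by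
    intro ω
    have hinter : Vv ⁻¹' (Prod.mk (Tv ω) ⁻¹' S) = ⋂ i ∈ s, V i ⁻¹' Ioi (T i ω) := by
      ext ω'
      simp [S, Tv, Vv]
    rw [Measure.map_apply hVv (measurable_prodMk_left hS), hinter,
      hV.measure_inter_preimage_eq_mul s (fun i _ => measurableSet_Ioi),
      ENNReal.ofReal_prod_of_nonneg fun i hi => sub_nonneg.2 (hT i hi ω).2]
    exact Finset.prod_congr rfl fun i hi =>
      measure_preimage_Ioi_of_map_eq_uniform (hVm i hi) (hVlaw i hi) (hT i hi ω)
  rw [hpre, ← Measure.map_apply (hTv.prodMk hVv) hS,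
    (indepFun_iff_map_prod_eq_prod_map_map hTv.aemeasurable hVv.aemeasurable).1 hTV,
    Measure.prod_apply hS, lintegral_map (measurable_measure_prodMk_left hS) hTv]
  exact lintegral_congr hslice

end Probability

theorem one_sub_indicator_mul_mem_Ioc {Ω : Type*} {s : Set Ω} {c : ℝ} (hc : c ∈ Ico 0 1)
    (ω : Ω) : 1 - s.indicator (1 : Ω → ℝ) ω * c ∈ Ioc 0 1 := by
  by_cases hω : ω ∈ s
  · simp only [indicator_of_mem hω, Pi.one_apply, one_mul, mem_Ioc]
    constructor <;> linarith [hc.1, hc.2]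
  · simp [indicator_of_notMem hω]

/-- `x * decayProd B γ n` is the path that `X n` follows as long as no `A`-move happens. -/
noncomputable def decayProd {Ω : Type*} (B : ℕ → Set Ω) (γ : ℕ → ℝ) (n : ℕ) (ω : Ω) : ℝ :=
  ∏ k ∈ Finset.Icc 1 n, (1 - (B k).indicator (1 : Ω → ℝ) ω * γ k)

namespace decayProd

variable {Ω : Type*} {B : ℕ → Set Ω} {γ : ℕ → ℝ}

theorem succ (n : ℕ) (ω : Ω) :
    decayProd B γ (n + 1) ω =
      decayProd B γ n ω * (1 - (B (n + 1)).indicator 1 ω * γ (n + 1)) :=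
  Finset.prod_Icc_succ_top (Nat.le_add_left 1 n) _

theorem mem_Ioc (hγ : ∀ k ≥ 1, γ k ∈ Ico 0 1) (n : ℕ) (ω : Ω) :
    decayProd B γ n ω ∈ Ioc 0 1 := by
  have hfac : ∀ k ∈ Finset.Icc 1 n, 1 - (B k).indicator (1 : Ω → ℝ) ω * γ k ∈ Ioc 0 1 :=
    fun k hk => one_sub_indicator_mul_mem_Ioc (hγ k (Finset.mem_Icc.1 hk).1) ω
  exact ⟨Finset.prod_pos fun k hk => (hfac k hk).1,
    Finset.prod_le_one (fun k hk => (hfac k hk).1.le) fun k hk => (hfac k hk).2⟩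

theorem mul_mem_Icc {x : ℝ} (hx : x ∈ Icc (0 : ℝ) 1) (hγ : ∀ k ≥ 1, γ k ∈ Ico 0 1) (n : ℕ)
    (ω : Ω) : x * decayProd B γ n ω ∈ Icc 0 1 :=
  ⟨mul_nonneg hx.1 (mem_Ioc hγ n ω).1.le,
    mul_le_one₀ hx.2 (mem_Ioc hγ n ω).1.le (mem_Ioc hγ n ω).2⟩

theorem one_sub_mul_mem_Icc {x : ℝ} (hx : x ∈ Icc (0 : ℝ) 1) (hγ : ∀ k ≥ 1, γ k ∈ Ico 0 1)
    (n : ℕ) (ω : Ω) : 1 - x * decayProd B γ n ω ∈ Icc 0 1 :=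
  have h := mul_mem_Icc (B := B) hx hγ n ω
  ⟨sub_nonneg.2 h.2, sub_le_self _ h.1⟩

variable [MeasurableSpace Ω] {μ : Measure Ω}

theorem measurable (hB : ∀ k ≥ 1, MeasurableSet (B k)) (n : ℕ) :
    Measurable (decayProd B γ n) :=
  Finset.measurable_prod _ fun k hk =>
    measurable_const.sub ((measurable_one.indicator (hB k (Finset.mem_Icc.1 hk).1)).mul_const _)

theorem integrable [IsFiniteMeasure μ] (hB : ∀ k ≥ 1, MeasurableSet (B k))
    (hγ : ∀ k ≥ 1, γ k ∈ Ico 0 1) (n : ℕ) : Integrable (decayProd B γ n) μ :=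
  .of_bound (measurable hB n).aestronglyMeasurable 1 <| ae_of_all _ fun ω => by
    rw [Real.norm_of_nonneg (mem_Ioc hγ n ω).1.le]
    exact (mem_Ioc hγ n ω).2

theorem integral_eq [IsProbabilityMeasure μ]
    (hind : iIndepFun (fun k => (B k).indicator (1 : Ω → ℝ)) μ)
    (hB : ∀ k ≥ 1, MeasurableSet (B k)) {p : ℝ} (hp : 0 ≤ p)
    (hpB : ∀ k ≥ 1, μ (B k) = ENNReal.ofReal p) (n : ℕ) :
    ∫ ω, decayProd B γ n ω ∂μ = ∏ k ∈ Finset.Icc 1 n, (1 - p * γ k) := by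
  have hfac : iIndepFun (fun k ω => 1 - (B k).indicator (1 : Ω → ℝ) ω * γ k) μ :=
    hind.comp (fun k r => 1 - r * γ k) fun k => by fun_prop
  have hBk : ∀ k ∈ Finset.Icc 1 n, MeasurableSet (B k) := fun k hk =>
    hB k (Finset.mem_Icc.1 hk).1
  unfold decayProd
  rw [hfac.integral_finset_prod _ fun k hk => (measurable_const.sub
    ((measurable_one.indicator (hBk k hk)).mul_const _)).aestronglyMeasurable]
  refine Finset.prod_congr rfl fun k hk => ?_
  rw [integral_one_sub_indicator_mul (hBk k hk), measureReal_def,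
    hpB k (Finset.mem_Icc.1 hk).1, ENNReal.toReal_ofReal hp]

theorem ae_summable [IsProbabilityMeasure μ]
    (hind : iIndepFun (fun k => (B k).indicator (1 : Ω → ℝ)) μ)
    (hB : ∀ k ≥ 1, MeasurableSet (B k)) (hγ : ∀ k ≥ 1, γ k ∈ Ico 0 1) {p : ℝ} (hp : 0 ≤ p)
    (hpB : ∀ k ≥ 1, μ (B k) = ENNReal.ofReal p)
    (hsum : Summable fun n => ∏ k ∈ Finset.Icc 1 n, (1 - p * γ k)) :
    ∀ᵐ ω ∂μ, Summable fun n => decayProd B γ n ω := by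
  refine ae_summable_of_summable_integral (integrable hB hγ)
    (fun n ω => (mem_Ioc hγ n ω).1.le) ?_
  simpa only [integral_eq hind hB hp hpB] using hsum

theorem integrable_tprod [IsFiniteMeasure μ] {x : ℝ} (hx : x ∈ Icc (0 : ℝ) 1)
    (hγ : ∀ k ≥ 1, γ k ∈ Ico 0 1) (hB : ∀ k ≥ 1, MeasurableSet (B k)) :
    Integrable (fun ω => ∏' n, (1 - x * decayProd B γ n ω)) μ := by
  have h0 (n : ℕ) (ω : Ω) := (one_sub_mul_mem_Icc (B := B) hx hγ n ω).1
  have h1 (n : ℕ) (ω : Ω) := (one_sub_mul_mem_Icc (B := B) hx hγ n ω).2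
  have hmeas := measurable_tprod_of_nonneg_of_le_one
    (fun n => measurable_const.sub ((measurable hB n).const_mul x)) h0 h1
  refine .of_bound hmeas.aestronglyMeasurable 1 (ae_of_all _ fun ω => ?_)
  rw [Real.norm_of_nonneg (tprod_nonneg (h0 · ω))]
  simpa using tprod_le_prod_of_nonneg_of_le_one (h0 · ω) (h1 · ω) ∅

theorem integral_tprod_pos [IsProbabilityMeasure μ]
    (hind : iIndepFun (fun k => (B k).indicator (1 : Ω → ℝ)) μ)
    (hB : ∀ k ≥ 1, MeasurableSet (B k)) (hγ : ∀ k ≥ 1, γ k ∈ Ico 0 1) {p : ℝ} (hp : 0 ≤ p)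
    (hpB : ∀ k ≥ 1, μ (B k) = ENNReal.ofReal p)
    (hsum : Summable fun n => ∏ k ∈ Finset.Icc 1 n, (1 - p * γ k)) {x : ℝ}
    (hx : x ∈ Ico (0 : ℝ) 1) :
    0 < ∫ ω, ∏' n, (1 - x * decayProd B γ n ω) ∂μ := by
  refine integral_pos_of_ae_pos (integrable_tprod (Ico_subset_Icc_self hx) hγ hB) ?_
  filter_upwards [ae_summable hind hB hγ hp hpB hsum] with ω hω
  have hlt (n : ℕ) : x * decayProd B γ n ω < 1 :=
    (mul_le_of_le_one_right hx.1 (mem_Ioc hγ n ω).2).trans_lt hx.2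
  exact tprod_one_sub_pos_of_summable hlt (hω.mul_left x)

theorem measure_forall_mul_lt_eq_lintegral [IsProbabilityMeasure μ] {U : ℕ → Ω → ℝ} {x : ℝ}
    (hx : x ∈ Icc (0 : ℝ) 1) (hγ : ∀ k ≥ 1, γ k ∈ Ico 0 1)
    (hB : ∀ k ≥ 1, MeasurableSet (B k)) (hU : ∀ n ≥ 1, Measurable (U n))
    (hUlaw : ∀ n ≥ 1, μ.map (U n) = volume.restrict (Icc (0 : ℝ) 1)) (hUind : iIndepFun U μ)
    (hUB : IndepFun (fun ω n => U n ω) (fun ω n => (B n).indicator (1 : Ω → ℝ) ω) μ) (N : ℕ) :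
    μ {ω | ∀ n ∈ Finset.range N, x * decayProd B γ n ω < U (n + 1) ω} =
      ∫⁻ ω, ENNReal.ofReal (∏ n ∈ Finset.range N, (1 - x * decayProd B γ n ω)) ∂μ := by
  refine measure_forall_lt_uniform_of_indepFun (V := fun n => U (n + 1))
    (T := fun n ω => x * decayProd B γ n ω)
    (hUind.precomp Nat.succ_injective) (fun n _ => hU (n + 1) (Nat.le_add_left 1 n))
    (fun n _ => hUlaw (n + 1) (Nat.le_add_left 1 n)) (fun n _ => (measurable hB n).const_mul x)
    (fun n _ => mul_mem_Icc hx hγ n) ?_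
  exact hUB.symm.comp
    (φ := fun (b : ℕ → ℝ) (n : Finset.range N) =>
      x * ∏ k ∈ Finset.Icc 1 (n : ℕ), (1 - b k * γ k))
    (ψ := fun (u : ℕ → ℝ) (n : Finset.range N) => u ((n : ℕ) + 1))
    (measurable_pi_lambda _ fun n => (Finset.measurable_prod _ fun k _ =>
      measurable_const.sub ((measurable_pi_apply k).mul_const _)).const_mul x)
    (measurable_pi_lambda _ fun n => measurable_pi_apply _)

theorem ofReal_integral_tprod_le_measure [IsProbabilityMeasure μ] {U : ℕ → Ω → ℝ} {x : ℝ}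
    (hx : x ∈ Icc (0 : ℝ) 1) (hγ : ∀ k ≥ 1, γ k ∈ Ico 0 1)
    (hB : ∀ k ≥ 1, MeasurableSet (B k)) (hU : ∀ n ≥ 1, Measurable (U n))
    (hUlaw : ∀ n ≥ 1, μ.map (U n) = volume.restrict (Icc (0 : ℝ) 1)) (hUind : iIndepFun U μ)
    (hUB : IndepFun (fun ω n => U n ω) (fun ω n => (B n).indicator (1 : Ω → ℝ) ω) μ) :
    ENNReal.ofReal (∫ ω, ∏' n, (1 - x * decayProd B γ n ω) ∂μ) ≤
      μ {ω | ∀ n, x * decayProd B γ n ω < U (n + 1) ω} := by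
  have h0 (n : ℕ) (ω : Ω) := (one_sub_mul_mem_Icc (B := B) hx hγ n ω).1
  have h1 (n : ℕ) (ω : Ω) := (one_sub_mul_mem_Icc (B := B) hx hγ n ω).2
  set D : ℕ → Set Ω := fun N =>
    {ω | ∀ n ∈ Finset.range N, x * decayProd B γ n ω < U (n + 1) ω}
  have hD : {ω | ∀ n, x * decayProd B γ n ω < U (n + 1) ω} = ⋂ N, D N := by
    ext ω
    simp only [D, mem_iInter, mem_ofPred_eq, Finset.mem_range]
    exact ⟨fun h N n _ => h n, fun h n => h (n + 1) n n.lt_succ_self⟩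
  have hD_anti : Antitone D := fun M N hMN ω hω n hn =>
    hω n (Finset.range_subset_range.2 hMN hn)
  have hD_meas (N : ℕ) : MeasurableSet (D N) := by
    simp only [D, ofPred_forall]
    exact MeasurableSet.iInter fun n => MeasurableSet.iInter fun _ =>
      measurableSet_lt ((measurable hB n).const_mul x) (hU (n + 1) (Nat.le_add_left 1 n))
  rw [hD, hD_anti.measure_iInter (fun N => (hD_meas N).nullMeasurableSet) ⟨0, measure_ne_top μ _⟩,
    ofReal_integral_eq_lintegral_ofReal (integrable_tprod hx hγ hB)
      (ae_of_all _ fun ω => tprod_nonneg (h0 · ω))]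
  refine le_iInf fun N => ?_
  rw [measure_forall_mul_lt_eq_lintegral hx hγ hB hU hUlaw hUind hUB N]
  exact lintegral_mono fun ω =>
    ENNReal.ofReal_le_ofReal (tprod_le_prod_of_nonneg_of_le_one (h0 · ω) (h1 · ω) _)

end decayProd

theorem eq_mul_decayProd_of_forall_lt {Ω : Type*} {U : ℕ → Ω → ℝ} {A B : ℕ → Set Ω}
    {γ : ℕ → ℝ} {x : ℝ} {X : ℕ → Ω → ℝ} (hX0 : ∀ ω, X 0 ω = x)
    (hrec : ∀ n ω, X (n + 1) ω = X n ω + γ (n + 1) *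
      ((1 - X n ω) * ({ω' | U (n + 1) ω' ≤ X n ω'} ∩ A (n + 1)).indicator (1 : Ω → ℝ) ω
        - X n ω * ({ω' | X n ω' < U (n + 1) ω'} ∩ B (n + 1)).indicator (1 : Ω → ℝ) ω))
    {ω : Ω} (hω : ∀ n, x * decayProd B γ n ω < U (n + 1) ω) (n : ℕ) :
    X n ω = x * decayProd B γ n ω := by
  induction n with
  | zero => simp [hX0, decayProd]
  | succ n ih =>
    have hlt : X n ω < U (n + 1) ω := ih ▸ hω n
    have hA : ({ω' | U (n + 1) ω' ≤ X n ω'} ∩ A (n + 1)).indicator (1 : Ω → ℝ) ω = 0 :=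
      indicator_of_notMem (fun h => (not_le.2 hlt) h.1) _
    have hB : ({ω' | X n ω' < U (n + 1) ω'} ∩ B (n + 1)).indicator (1 : Ω → ℝ) ω =
        (B (n + 1)).indicator 1 ω := by
      by_cases hb : ω ∈ B (n + 1)
      · rw [indicator_of_mem (show ω ∈ _ ∩ _ from ⟨hlt, hb⟩), indicator_of_mem hb]
      · rw [indicator_of_notMem (fun h => hb h.2), indicator_of_notMem hb]
    rw [hrec, hA, hB, ih, decayProd.succ]
    ring

theorem stmt13_general (Ω : Type*) [mΩ : MeasurableSpace Ω] (μ : Measure Ω) [IsProbabilityMeasure μ]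
    (U : ℕ → Ω → ℝ) (A B : ℕ → Set Ω) (γ : ℕ → ℝ) (x : ℝ)
    (hx : x ∈ Set.Ico (0:ℝ) 1)
    (pB : ℝ) (hpBpos : 0 < pB)
    (hpB : ∀ n ≥ 1, μ (B n) = ENNReal.ofReal pB)
    (hγ : ∀ n ≥ 1, γ n ∈ Set.Ioo (0:ℝ) 1)
    (hsum : Summable (fun n : ℕ => ∏ k ∈ Finset.Icc 1 n, (1 - pB * γ k)))
    (hB : ∀ n ≥ 1, MeasurableSet (B n))
    (hU : ∀ n ≥ 1, Measurable (U n))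
    (hUlaw : ∀ n ≥ 1, μ.map (U n) = volume.restrict (Set.Icc (0:ℝ) 1))
    (hiid : iIndepFun (m := fun _ : ℕ => (inferInstance : MeasurableSpace (ℝ × ℝ × ℝ)))
      (fun n ω => (U n ω, (A n).indicator (1 : Ω → ℝ) ω, (B n).indicator (1 : Ω → ℝ) ω)) μ)
    (hindep : IndepFun (fun ω (n : ℕ) => U n ω)
      (fun ω (n : ℕ) => ((A n).indicator (1 : Ω → ℝ) ω, (B n).indicator (1 : Ω → ℝ) ω)) μ)
    (X : ℕ → Ω → ℝ) (hX0 : ∀ ω, X 0 ω = x)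
    (hrec : ∀ n ω, X (n + 1) ω = X n ω + γ (n + 1) *
      ((1 - X n ω) * ({ω' | U (n + 1) ω' ≤ X n ω'} ∩ A (n + 1)).indicator (1 : Ω → ℝ) ω
        - X n ω * ({ω' | X n ω' < U (n + 1) ω'} ∩ B (n + 1)).indicator (1 : Ω → ℝ) ω)) :
    (0 < ∫ ω, (∏' n : ℕ,
        (1 - x * ∏ k ∈ Finset.Icc 1 n, (1 - (B k).indicator (1 : Ω → ℝ) ω * γ k))) ∂μ) ∧
      ENNReal.ofReal (∫ ω, (∏' n : ℕ,
        (1 - x * ∏ k ∈ Finset.Icc 1 n, (1 - (B k).indicator (1 : Ω → ℝ) ω * γ k))) ∂μ)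
        ≤ μ {ω | Filter.Tendsto (fun n => X n ω) atTop (nhds 0)} := by
  have hγ' : ∀ k ≥ 1, γ k ∈ Ico (0 : ℝ) 1 := fun k hk => Ioo_subset_Ico_self (hγ k hk)
  have hUind : iIndepFun U μ := hiid.comp (fun _ p => p.1) fun _ => measurable_fst
  have hBind : iIndepFun (fun k => (B k).indicator (1 : Ω → ℝ)) μ :=
    hiid.comp (fun _ p => p.2.2) fun _ => measurable_snd.comp measurable_snd
  have hUB : IndepFun (fun ω n => U n ω) (fun ω n => (B n).indicator (1 : Ω → ℝ) ω) μ :=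
    hindep.comp (φ := id) (ψ := fun (v : ℕ → ℝ × ℝ) (n : ℕ) => (v n).2) measurable_id
      (measurable_pi_lambda _ fun n => (measurable_pi_apply n).snd)
  refine ⟨decayProd.integral_tprod_pos hBind hB hγ' hpBpos.le hpB hsum hx, ?_⟩
  refine (decayProd.ofReal_integral_tprod_le_measure (Ico_subset_Icc_self hx) hγ' hB hU hUlaw
    hUind hUB).trans (measure_mono_ae ?_)
  filter_upwards [decayProd.ae_summable hBind hB hγ' hpBpos.le hpB hsum] with ω hsumω hω
  have hX := eq_mul_decayProd_of_forall_lt hX0 hrec hω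
  show Tendsto (fun n => X n ω) atTop (nhds 0)
  simpa [hX] using hsumω.tendsto_atTop_zero.const_mul x

theorem stmt13 (Ω : Type*) [mΩ : MeasurableSpace Ω] (μ : Measure Ω) [IsProbabilityMeasure μ]
    (U : ℕ → Ω → ℝ) (A B : ℕ → Set Ω) (γ : ℕ → ℝ) (x : ℝ)
    (hx : x ∈ Set.Ico (0:ℝ) 1)
    (pA pB : ℝ) (hpBpos : 0 < pB)
    (hpA : ∀ n ≥ 1, μ (A n) = ENNReal.ofReal pA)
    (hpB : ∀ n ≥ 1, μ (B n) = ENNReal.ofReal pB)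
    (hγ : ∀ n ≥ 1, γ n ∈ Set.Ioo (0:ℝ) 1)
    (hΓdiv : Filter.Tendsto (fun n => ∑ k ∈ Finset.Icc 1 n, γ k) atTop atTop)
    (hsum : Summable (fun n : ℕ => ∏ k ∈ Finset.Icc 1 n, (1 - pB * γ k)))
    (hA : ∀ n ≥ 1, MeasurableSet (A n)) (hB : ∀ n ≥ 1, MeasurableSet (B n))
    (hU : ∀ n ≥ 1, Measurable (U n))
    (hUlaw : ∀ n ≥ 1, μ.map (U n) = volume.restrict (Set.Icc (0:ℝ) 1))
    (hiid : iIndepFun (m := fun _ : ℕ => (inferInstance : MeasurableSpace (ℝ × ℝ × ℝ)))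
      (fun n ω => (U n ω, (A n).indicator (1 : Ω → ℝ) ω, (B n).indicator (1 : Ω → ℝ) ω)) μ)
    (hident : ∀ n ≥ 1,
      IdentDistrib (fun ω => ((A n).indicator (1 : Ω → ℝ) ω, (B n).indicator (1 : Ω → ℝ) ω))
        (fun ω => ((A 1).indicator (1 : Ω → ℝ) ω, (B 1).indicator (1 : Ω → ℝ) ω)) μ μ)
    (hindep : IndepFun (fun ω (n : ℕ) => U n ω)
      (fun ω (n : ℕ) => ((A n).indicator (1 : Ω → ℝ) ω, (B n).indicator (1 : Ω → ℝ) ω)) μ)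
    (X : ℕ → Ω → ℝ) (hX0 : ∀ ω, X 0 ω = x)
    (hrec : ∀ n ω, X (n + 1) ω = X n ω + γ (n + 1) *
      ((1 - X n ω) * ({ω' | U (n + 1) ω' ≤ X n ω'} ∩ A (n + 1)).indicator (1 : Ω → ℝ) ω
        - X n ω * ({ω' | X n ω' < U (n + 1) ω'} ∩ B (n + 1)).indicator (1 : Ω → ℝ) ω)) :
    (0 < ∫ ω, (∏' n : ℕ,
        (1 - x * ∏ k ∈ Finset.Icc 1 n, (1 - (B k).indicator (1 : Ω → ℝ) ω * γ k))) ∂μ) ∧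
      ENNReal.ofReal (∫ ω, (∏' n : ℕ,
        (1 - x * ∏ k ∈ Finset.Icc 1 n, (1 - (B k).indicator (1 : Ω → ℝ) ω * γ k))) ∂μ)
        ≤ μ {ω | Filter.Tendsto (fun n => X n ω) atTop (nhds 0)} :=
  stmt13_general Ω (mΩ := mΩ) μ U A B γ x hx pB hpBpos hpB hγ hsum hB hU hUlaw hiid hindep X hX0
    hrec
end
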